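/- arXiv:2601.15494 — 5 statements merged into one kernel-verified Lean document; each statement's English description precedes it below -/
import Mathlib

section
/- Given parameters π, τ, m > 0, γ > σ > 0 and Λ = (γ/(γ-σ))^{1/σ}, define the developer payoff Π(q) = π q^σ/(m_s q̄^σ) with q̄ = Λ q₀ and m_s = m q₀^{-γ}. Then the indifference condition Π(q₀) = τ has the unique positive solution q₀ = (τ m Λ^σ/π)^{1/γ}, and consequently m_s = π/(τ Λ^σ), which is independent of m. -/
/-! After cancelling `x ^ σ`, the indifference condition reads `π x ^ γ / (m Λ ^ σ) = τ`,
i.e. `x ^ γ = τ m Λ ^ σ / π`, which has exactly one positive root since `γ > 0`.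
Substituting `q₀ ^ γ` back into `m_s = m / q₀ ^ γ` cancels `m`. -/

lemma payoff_eq_mul_rpow_div {π m Λ x : ℝ} (σ γ : ℝ) (hΛ : 0 ≤ Λ) (hx : 0 < x) :
    π * x ^ σ / (m * x ^ (-γ) * (Λ * x) ^ σ) = π * x ^ γ / (m * Λ ^ σ) := by
  have hxσ : x ^ σ ≠ 0 := (Real.rpow_pos_of_pos hx σ).ne'
  have hden : m * x ^ (-γ) * (Λ * x) ^ σ = m * Λ ^ σ / x ^ γ * x ^ σ := by
    rw [Real.mul_rpow hΛ hx.le, Real.rpow_neg hx.le]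
    ring
  rw [hden, mul_div_mul_right π _ hxσ, div_div_eq_mul_div]

lemma payoff_eq_iff {π τ m Λ x : ℝ} (σ γ : ℝ) (hπ : π ≠ 0) (hmΛ : m * Λ ^ σ ≠ 0)
    (hΛ : 0 ≤ Λ) (hx : 0 < x) :
    π * x ^ σ / (m * x ^ (-γ) * (Λ * x) ^ σ) = τ ↔ x ^ γ = τ * m * Λ ^ σ / π := by
  rw [payoff_eq_mul_rpow_div σ γ hΛ hx, div_eq_iff hmΛ, eq_div_iff hπ, mul_assoc τ]
  constructor <;> intro h <;> linear_combination h

/-- The sharing indifference condition Π(q₀) = τ, where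
Π(q) = π q^σ/(m_s q̄^σ) with q̄ = Λ q₀ and m_s = m q₀^{-γ}, has the unique
positive solution q₀ = (τ m Λ^σ/π)^{1/γ}, and then m_s = π/(τ Λ^σ),
independent of m. -/
theorem sharing_cutoff (π τ m γ σ : ℝ) (hπ : 0 < π) (hτ : 0 < τ) (hm : 0 < m)
    (hσ : 0 < σ) (hγσ : σ < γ) :
    let Λ : ℝ := (γ / (γ - σ)) ^ (1 / σ)
    let q₀ : ℝ := (τ * m * Λ ^ σ / π) ^ (1 / γ)
    (0 < q₀ ∧ π * q₀ ^ σ / (m * q₀ ^ (-γ) * (Λ * q₀) ^ σ) = τ) ∧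
    (∀ x : ℝ, 0 < x → π * x ^ σ / (m * x ^ (-γ) * (Λ * x) ^ σ) = τ → x = q₀) ∧
    m * q₀ ^ (-γ) = π / (τ * Λ ^ σ) := by
  intro Λ q₀
  have hγ : 0 < γ := hσ.trans hγσ
  have hΛ : 0 < Λ := Real.rpow_pos_of_pos (div_pos hγ (sub_pos.2 hγσ)) _
  have hC : 0 < τ * m * Λ ^ σ / π := by positivity
  have hq₀ : 0 < q₀ := Real.rpow_pos_of_pos hC _
  have hroot {x : ℝ} (hx : 0 < x) : x = q₀ ↔ x ^ γ = τ * m * Λ ^ σ / π := by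
    rw [show q₀ = (τ * m * Λ ^ σ / π) ^ γ⁻¹ by rw [← one_div]]
    exact Real.eq_rpow_inv hx.le hC.le hγ.ne'
  have hq₀γ : q₀ ^ γ = τ * m * Λ ^ σ / π := (hroot hq₀).1 rfl
  have hpayoff {x : ℝ} (hx : 0 < x) :
      π * x ^ σ / (m * x ^ (-γ) * (Λ * x) ^ σ) = τ ↔ x ^ γ = τ * m * Λ ^ σ / π :=
    payoff_eq_iff σ γ hπ.ne' (by positivity) hΛ.le hx
  refine ⟨⟨hq₀, (hpayoff hq₀).2 hq₀γ⟩, fun x hx h ↦ (hroot hx).2 ((hpayoff hx).1 h), ?_⟩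
  rw [Real.rpow_neg hq₀.le, hq₀γ]
  field_simp
end

section
/- Suppose q is Pareto with tail P(q > x) = x^{-γ} on [1,∞), γ > σ > 0, the sharing payoff is Π(q) = τ(q/q₀)^σ for q ≥ q₀ (net payoff Π(q) − τ, and 0 for q < q₀), where q₀ = (τ m Λ^σ/π)^{1/γ} ≥ 1. Then the expected net payoff satisfies E[max{Π(q) − τ, 0}] = (σ/(γ−σ))·π/(m Λ^σ). -/
open MeasureTheory

/-- With q Pareto on [1,∞) (density γ q^{-γ-1}), γ > σ > 0,
sharing payoff Π(q) = τ(q/q₀)^σ for q ≥ q₀ (net payoff Π(q) - τ, and 0 below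
the cutoff), where q₀ = (τ m Λ^σ/π)^{1/γ} ≥ 1 and Λ = (γ/(γ-σ))^{1/σ}, the
expected net payoff is E[max{Π(q)-τ,0}] = (σ/(γ-σ))·π/(m Λ^σ). -/
theorem expected_net_payoff (γ σ π τ m : ℝ) (hσ : 0 < σ) (hγσ : σ < γ)
    (hπ : 0 < π) (hτ : 0 < τ) (hm : 0 < m)
    (hq₀ : 1 ≤ (τ * m * ((γ / (γ - σ)) ^ (1 / σ)) ^ σ / π) ^ (1 / γ)) :
    let Λ : ℝ := (γ / (γ - σ)) ^ (1 / σ)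
    let q₀ : ℝ := (τ * m * Λ ^ σ / π) ^ (1 / γ)
    ∫ q in Set.Ioi q₀, (τ * ((q / q₀) ^ σ - 1)) * (γ * q ^ (-γ - 1)) =
      σ / (γ - σ) * (π / (m * Λ ^ σ)) := by
  intro Λ q₀
  have hγ : 0 < γ := hσ.trans hγσ
  have hγσ' : 0 < γ - σ := by linarith
  have hΛσ : Λ ^ σ = γ / (γ - σ) := by
    rw [show Λ = (γ / (γ - σ)) ^ (1 / σ) from rfl,
      ← Real.rpow_mul (le_of_lt (div_pos hγ hγσ')),
      one_div_mul_cancel hσ.ne', Real.rpow_one]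
  have hX : 0 < τ * m * Λ ^ σ / π := by
    rw [hΛσ]; positivity
  have hq₀pos : 0 < q₀ := Real.rpow_pos_of_pos hX _
  have hq₀γ : q₀ ^ (-γ) = π / (τ * m * Λ ^ σ) := by
    rw [show q₀ = (τ * m * Λ ^ σ / π) ^ (1 / γ) from rfl,
      ← Real.rpow_mul hX.le, one_div, inv_mul_eq_div, neg_div, div_self hγ.ne',
      Real.rpow_neg_one, inv_div]
  have hlt1 : σ - γ - 1 < -1 := by linarith
  have hlt2 : -γ - 1 < -1 := by linarith
  have key : ∀ q ∈ Set.Ioi q₀, (τ * ((q / q₀) ^ σ - 1)) * (γ * q ^ (-γ - 1)) =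
      (τ * γ * q₀ ^ (-σ)) * q ^ (σ - γ - 1) - (τ * γ) * q ^ (-γ - 1) := by
    intro q hq
    have hqpos : 0 < q := hq₀pos.trans hq
    rw [Real.div_rpow hqpos.le hq₀pos.le, Real.rpow_neg hq₀pos.le,
      show σ - γ - 1 = σ + (-γ - 1) by ring, Real.rpow_add hqpos]
    field_simp [(Real.rpow_pos_of_pos hq₀pos σ).ne']
  rw [setIntegral_congr_fun measurableSet_Ioi key, integral_sub
      (((integrableOn_Ioi_rpow_of_lt hlt1 hq₀pos).const_mul _))
      (((integrableOn_Ioi_rpow_of_lt hlt2 hq₀pos).const_mul _)),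
    integral_const_mul, integral_const_mul, integral_Ioi_rpow_of_lt hlt1 hq₀pos,
    integral_Ioi_rpow_of_lt hlt2 hq₀pos]
  have e1 : q₀ ^ (-σ) * q₀ ^ (σ - γ - 1 + 1) = q₀ ^ (-γ) := by
    rw [← Real.rpow_add hq₀pos]; ring_nf
  have e2 : (-γ - 1 + 1 : ℝ) = -γ := by ring
  rw [e2]
  have e3 : q₀ ^ (σ - γ - 1 + 1) = q₀ ^ σ * q₀ ^ (-γ) := by
    rw [← Real.rpow_add hq₀pos]; ring_nf
  have e4 : q₀ ^ (-σ) = (q₀ ^ σ)⁻¹ := Real.rpow_neg hq₀pos.le σ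
  have h2 : σ - γ - 1 + 1 ≠ 0 := by intro h; apply hγσ'.ne'; linarith
  have calcaux : ∀ A C : ℝ, A ≠ 0 →
      τ * γ * A⁻¹ * (-(A * C) / (σ - γ - 1 + 1)) - τ * γ * (-C / (-γ)) =
        τ * (σ / (γ - σ)) * C := by
    intro A C hA
    have h3 : σ - γ - 1 + 1 = σ - γ := by ring
    rw [h3]
    have h4 : σ - γ ≠ 0 := sub_ne_zero.mpr hγσ.ne
    have h5 : γ - σ ≠ 0 := hγσ'.ne'
    field_simp
    ring
  have : τ * γ * q₀ ^ (-σ) * (-q₀ ^ (σ - γ - 1 + 1) / (σ - γ - 1 + 1)) -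
      τ * γ * (-q₀ ^ (-γ) / (-γ)) = τ * (σ / (γ - σ)) * q₀ ^ (-γ) := by
    rw [e3, e4]
    exact calcaux _ _ (Real.rpow_pos_of_pos hq₀pos σ).ne'
  rw [this, hq₀γ, hΛσ]
  have hmne : m * (γ / (γ - σ)) ≠ 0 := by positivity
  field_simp
end

section
/- (Long-run effect of vibe coding) Let 0 < β < 1, γ > σ > 1, θ > σ, η = 1 − β/γ. Suppose m^η = A·π^{1+β/σ−β/γ}·u^β with π = π̄(1−v) and u = (1−v)^{-1/θ}, and m₀ is the solution at v = 0. Then for v ∈ (0,1): m/m₀ = (1−v)^{1 + β(1/σ−1/θ)/η} < 1, m_s/m_{s,0} = 1−v < 1, and q̄/q̄₀ = (1−v)^{β(1/σ−1/θ)/(γη)} < 1. -/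
/-- Long-run effect of vibe coding: with 0 < β < 1, γ > σ > 1,
θ > σ, η = 1 - β/γ, suppose m^η = A·π^{1+β/σ-β/γ}·u^β with π = π̄(1-v),
u = (1-v)^{-1/θ}, and m₀^η = A·π̄^{1+β/σ-β/γ} (baseline at v = 0). With
m_s = π/(τΛ^σ), m_{s,0} = π̄/(τΛ^σ), q̄ = Λ^{1+σ/γ}(τ m/π)^{1/γ},
q̄₀ = Λ^{1+σ/γ}(τ m₀/π̄)^{1/γ}, then for v ∈ (0,1):
m/m₀ = (1-v)^{1+β(1/σ-1/θ)/η} < 1, m_s/m_{s,0} = 1-v < 1, and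
q̄/q̄₀ = (1-v)^{β(1/σ-1/θ)/(γη)} < 1. -/
theorem long_run_vibe (β γ σ θ A τ πbar v m m₀ : ℝ)
    (hβ0 : 0 < β) (hβ1 : β < 1) (hσ : 1 < σ) (hγσ : σ < γ) (hθσ : σ < θ)
    (hA : 0 < A) (hτ : 0 < τ) (hπ : 0 < πbar)
    (hv0 : 0 < v) (hv1 : v < 1) (hm : 0 < m) (hm₀ : 0 < m₀)
    (hη : (0:ℝ) < 1 - β / γ)
    (heq : m ^ (1 - β / γ) =
      A * (πbar * (1 - v)) ^ (1 + β / σ - β / γ) * ((1 - v) ^ (-(1 / θ))) ^ β)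
    (heq₀ : m₀ ^ (1 - β / γ) = A * πbar ^ (1 + β / σ - β / γ)) :
    let Λ : ℝ := (γ / (γ - σ)) ^ (1 / σ)
    let ms : ℝ := πbar * (1 - v) / (τ * Λ ^ σ)
    let ms₀ : ℝ := πbar / (τ * Λ ^ σ)
    let qbar : ℝ := Λ ^ (1 + σ / γ) * (τ * m / (πbar * (1 - v))) ^ (1 / γ)
    let qbar₀ : ℝ := Λ ^ (1 + σ / γ) * (τ * m₀ / πbar) ^ (1 / γ)
    (m / m₀ = (1 - v) ^ (1 + β * (1 / σ - 1 / θ) / (1 - β / γ)) ∧ m / m₀ < 1) ∧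
    (ms / ms₀ = 1 - v ∧ ms / ms₀ < 1) ∧
    (qbar / qbar₀ = (1 - v) ^ (β * (1 / σ - 1 / θ) / (γ * (1 - β / γ))) ∧
      qbar / qbar₀ < 1) := by

  intro Λ ms ms₀ qbar qbar₀
  have hw : (0:ℝ) < 1 - v := by linarith
  have hw1 : 1 - v < 1 := by linarith
  have hγ0 : (0:ℝ) < γ := by linarith
  have hσ0 : (0:ℝ) < σ := by linarith
  have hθ0 : (0:ℝ) < θ := by linarith
  have hθσ' : 1 / θ < 1 / σ := by
    exact one_div_lt_one_div_of_lt hσ0 hθσ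
  have hd : 0 < 1 / σ - 1 / θ := by linarith
  have hηne : (1 - β / γ) ≠ 0 := ne_of_gt hη
  -- key multiplicative relation
  have key : m ^ (1 - β / γ) =
      m₀ ^ (1 - β / γ) * (1 - v) ^ ((1 + β / σ - β / γ) - β / θ) := by
    rw [heq, heq₀, Real.mul_rpow hπ.le hw.le, ← Real.rpow_mul hw.le,
      mul_assoc, mul_assoc, ← Real.rpow_add hw]
    rw [show (1 + β / σ - β / γ) + (-(1/θ)*β) = 1 + β/σ - β/γ - β/θ by ring]
    ring
  have hratio : (m / m₀) ^ (1 - β / γ) =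
      (1 - v) ^ ((1 + β / σ - β / γ) - β / θ) := by
    rw [Real.div_rpow hm.le hm₀.le, key,
      mul_div_cancel_left₀ _ (ne_of_gt (Real.rpow_pos_of_pos hm₀ _))]
  have hmm : m / m₀ = (1 - v) ^ (((1 + β / σ - β / γ) - β / θ) * (1 - β / γ)⁻¹) := by
    have h := congrArg (fun x : ℝ => x ^ ((1 - β / γ)⁻¹)) hratio
    rw [← Real.rpow_mul (div_pos hm hm₀).le, ← Real.rpow_mul hw.le,
      mul_inv_cancel₀ hηne, Real.rpow_one] at h
    exact h
  have hexp : ((1 + β / σ - β / γ) - β / θ) * (1 - β / γ)⁻¹ =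
      1 + β * (1 / σ - 1 / θ) / (1 - β / γ) := by
    have hσne : σ ≠ 0 := ne_of_gt hσ0
    have hθne : θ ≠ 0 := ne_of_gt hθ0
    have h1 : (1 + β / σ - β / γ - β / θ) = (1 - β / γ) + β * (1/σ - 1/θ) := by
      field_simp
      ring
    rw [h1, add_mul, mul_inv_cancel₀ hηne]; ring
  have hmain : m / m₀ = (1 - v) ^ (1 + β * (1 / σ - 1 / θ) / (1 - β / γ)) := by
    rw [hmm, hexp]
  have hc1 : 0 < 1 + β * (1 / σ - 1 / θ) / (1 - β / γ) := by positivity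
  have hm1 : m / m₀ < 1 := by
    rw [hmain]; exact Real.rpow_lt_one hw.le hw1 hc1
  -- ms part
  have hΛ : (0:ℝ) < Λ := by
    have : (0:ℝ) < γ / (γ - σ) := by
      apply div_pos hγ0; linarith
    exact Real.rpow_pos_of_pos this _
  have hΛσ : (0:ℝ) < τ * Λ ^ σ := by
    exact mul_pos hτ (Real.rpow_pos_of_pos hΛ σ)
  have hms : ms / ms₀ = 1 - v := by
    show (πbar * (1 - v) / (τ * Λ ^ σ)) / (πbar / (τ * Λ ^ σ)) = 1 - v
    field_simp
  -- qbar part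
  have hq : qbar / qbar₀ = (1 - v) ^ (β * (1 / σ - 1 / θ) / (γ * (1 - β / γ))) := by
    show (Λ ^ (1 + σ / γ) * (τ * m / (πbar * (1 - v))) ^ (1 / γ)) /
        (Λ ^ (1 + σ / γ) * (τ * m₀ / πbar) ^ (1 / γ)) =
        (1 - v) ^ (β * (1 / σ - 1 / θ) / (γ * (1 - β / γ)))
    have hin : τ * m / (πbar * (1 - v)) / (τ * m₀ / πbar) =
        (1 - v) ^ (β * (1 / σ - 1 / θ) / (1 - β / γ)) := by
      have : τ * m / (πbar * (1 - v)) / (τ * m₀ / πbar) = (m / m₀) / (1 - v) := by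
        field_simp
      rw [this, hmain, Real.rpow_add hw, Real.rpow_one,
        mul_div_cancel_left₀ _ (ne_of_gt hw)]
    have hpos1 : (0:ℝ) < τ * m / (πbar * (1 - v)) := by positivity
    have hpos2 : (0:ℝ) < τ * m₀ / πbar := by positivity
    rw [mul_div_mul_left _ _ (ne_of_gt (Real.rpow_pos_of_pos hΛ _)),
      ← Real.div_rpow hpos1.le hpos2.le, hin, ← Real.rpow_mul hw.le]
    congr 1
    rw [div_mul_div_comm, mul_one, mul_comm (1 - β / γ) γ]
  have hc2 : 0 < β * (1 / σ - 1 / θ) / (γ * (1 - β / γ)) := by positivity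
  refine ⟨⟨hmain, hm1⟩, ⟨hms, by rw [hms]; linarith⟩, hq, ?_⟩
  rw [hq]; exact Real.rpow_lt_one hw.le hw1 hc2
end

section
/- Under the long-run equilibrium with θ > σ > 1, 0 < β < 1, γ > σ, η = 1 − β/γ, the welfare ratio satisfies U/U₀ = (1−v)^{1/σ − 1/θ + β(1/σ−1/θ)/(γη)}, and since 1/σ − 1/θ > 0 and the correction term is positive, U/U₀ < 1 for all v ∈ (0,1): welfare falls despite the productivity gain. -/
/-- In the long-run equilibrium with θ > σ > 1, 0 < β < 1,
γ > σ, η = 1 - β/γ, welfare U = q̄·u·m_s^{1/σ} with u = (1-v)^{-1/θ},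
m_s/m_{s,0} = 1-v, q̄/q̄₀ = (1-v)^{β(1/σ-1/θ)/(γη)}; the welfare ratio is
U/U₀ = (1-v)^{1/σ - 1/θ + β(1/σ-1/θ)/(γη)} and U/U₀ < 1 for all v ∈ (0,1). -/
theorem long_run_welfare (β γ σ θ v qbar qbar₀ ms ms₀ : ℝ)
    (hβ0 : 0 < β) (hβ1 : β < 1) (hσ : 1 < σ) (hγσ : σ < γ) (hθσ : σ < θ)
    (hv0 : 0 < v) (hv1 : v < 1)
    (hqbar₀ : 0 < qbar₀) (hms₀ : 0 < ms₀)
    (hη : (0:ℝ) < 1 - β / γ)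
    (hqs : qbar / qbar₀ = (1 - v) ^ (β * (1 / σ - 1 / θ) / (γ * (1 - β / γ))))
    (hms : ms / ms₀ = 1 - v) :
    let U : ℝ := qbar * (1 - v) ^ (-(1 / θ)) * ms ^ (1 / σ)
    let U₀ : ℝ := qbar₀ * 1 * ms₀ ^ (1 / σ)
    U / U₀ =
      (1 - v) ^ (1 / σ - 1 / θ + β * (1 / σ - 1 / θ) / (γ * (1 - β / γ))) ∧
    U / U₀ < 1 := by
  intro U U₀
  have hw0 : (0:ℝ) < 1 - v := by linarith
  have hw1 : 1 - v < 1 := by linarith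
  set A : ℝ := β * (1 / σ - 1 / θ) / (γ * (1 - β / γ)) with hA
  have hσ0 : (0:ℝ) < σ := by linarith
  have hθ0 : (0:ℝ) < θ := by linarith
  have hγ0 : (0:ℝ) < γ := by linarith
  have hst : (0:ℝ) < 1 / σ - 1 / θ := by
    have := one_div_lt_one_div_of_lt hσ0 hθσ
    linarith
  have hApos : 0 < A := by
    apply div_pos (by positivity) (by positivity)
  have hq : qbar = qbar₀ * (1 - v) ^ A := by
    field_simp at hqs; linarith [hqs]
  have hm : ms = ms₀ * (1 - v) := by
    field_simp at hms; linarith [hms]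
  have hmain : U / U₀ = (1 - v) ^ (1 / σ - 1 / θ + A) := by
    show qbar * (1 - v) ^ (-(1 / θ)) * ms ^ (1 / σ) / (qbar₀ * 1 * ms₀ ^ (1 / σ))
        = (1 - v) ^ (1 / σ - 1 / θ + A)
    rw [hq, hm, Real.mul_rpow hms₀.le hw0.le]
    have hms₀p : (0:ℝ) < ms₀ ^ (1 / σ) := Real.rpow_pos_of_pos hms₀ _
    rw [show 1 / σ - 1 / θ + A = A + -(1/θ) + 1/σ by ring,
      Real.rpow_add hw0, Real.rpow_add hw0]
    field_simp
  refine ⟨hmain, ?_⟩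
  rw [hmain]
  exact Real.rpow_lt_one hw0.le hw1 (by linarith)
end

section
/- (Minimum monetization bound) Let 0 < β < 1, γ > σ > 1, θ > σ, and define ω = (1/θ)/(1/β + 1/σ − 1/γ). Then ω ∈ (0,1), and if the equilibrium mass of entrants satisfies m^η = A·π^{1+β/σ−β/γ}·u^β with u = (1−v)^{-1/θ}, η = 1 − β/γ, then m ≥ m₀ (the baseline with π = π₀, u = 1) if and only if π/π₀ ≥ (1−v)^ω. -/
/-- Minimum monetization bound: with 0 < β < 1, γ > σ > 1,
θ > σ, ω = (1/θ)/(1/β + 1/σ - 1/γ) lies in (0,1); and if entry satisfies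
m^η = A·π^{1+β/σ-β/γ}·u^β with u = (1-v)^{-1/θ}, η = 1 - β/γ, while the
baseline (π = π₀, u = 1) satisfies m₀^η = A·π₀^{1+β/σ-β/γ}, then
m ≥ m₀ if and only if π/π₀ ≥ (1-v)^ω. -/
theorem minimum_monetization (β γ σ θ A v π π₀ m m₀ : ℝ)
    (hβ0 : 0 < β) (hβ1 : β < 1) (hσ : 1 < σ) (hγσ : σ < γ) (hθσ : σ < θ)
    (hA : 0 < A) (hv0 : 0 < v) (hv1 : v < 1)
    (hπ : 0 < π) (hπ₀ : 0 < π₀) (hm : 0 < m) (hm₀ : 0 < m₀)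
    (hη : (0:ℝ) < 1 - β / γ)
    (heq : m ^ (1 - β / γ) =
      A * π ^ (1 + β / σ - β / γ) * ((1 - v) ^ (-(1 / θ))) ^ β)
    (heq₀ : m₀ ^ (1 - β / γ) = A * π₀ ^ (1 + β / σ - β / γ)) :
    let ω : ℝ := (1 / θ) / (1 / β + 1 / σ - 1 / γ)
    (0 < ω ∧ ω < 1) ∧ (m₀ ≤ m ↔ (1 - v) ^ ω ≤ π / π₀) := by
  intro ω
  have hσ0 : (0:ℝ) < σ := by linarith
  have hγ0 : (0:ℝ) < γ := by linarith
  have hθ0 : (0:ℝ) < θ := by linarith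
  have hv : (0:ℝ) < 1 - v := by linarith
  have hγβ : 1 / γ < 1 / β := by
    apply one_div_lt_one_div_of_lt hβ0; linarith
  have hσθ : 1 / θ < 1 / σ := one_div_lt_one_div_of_lt hσ0 hθσ
  have hσp : (0:ℝ) < 1 / σ := by positivity
  have hD : (0:ℝ) < 1 / β + 1 / σ - 1 / γ := by linarith
  have hθp : (0:ℝ) < 1 / θ := by positivity
  have hω0 : 0 < ω := div_pos hθp hD
  have hω1 : ω < 1 := by
    rw [show ω = (1/θ)/(1/β+1/σ-1/γ) from rfl, div_lt_one hD]; linarith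
  have he : (0:ℝ) < 1 + β / σ - β / γ := by
    have : 0 < β / σ := by positivity
    linarith
  have hωe : ω * (1 + β / σ - β / γ) = β / θ := by
    have h1 : 1 + β / σ - β / γ = β * (1 / β + 1 / σ - 1 / γ) := by
      field_simp
    rw [show ω = (1/θ)/(1/β+1/σ-1/γ) from rfl, h1]
    rw [div_mul_eq_mul_div, mul_comm (1/θ) (β * (1 / β + 1 / σ - 1 / γ)),
      mul_assoc, mul_div_assoc, mul_comm (1 / β + 1 / σ - 1 / γ) (1/θ),
      mul_div_assoc, div_self hD.ne', mul_one]
    ring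
  refine ⟨⟨hω0, hω1⟩, ?_⟩
  have hu : ((1 - v) ^ (-(1 / θ)) : ℝ) ^ β = (1 - v) ^ (-(β / θ)) := by
    rw [← Real.rpow_mul hv.le]
    congr 1
    ring
  have key : m₀ ≤ m ↔ m₀ ^ (1 - β / γ) ≤ m ^ (1 - β / γ) :=
    (Real.rpow_le_rpow_iff hm₀.le hm.le hη).symm
  rw [key, heq, heq₀, hu, mul_assoc, mul_le_mul_iff_right₀ hA,
    Real.rpow_neg hv.le, ← div_eq_mul_inv,
    le_div_iff₀ (by positivity : (0:ℝ) < (1 - v) ^ (β / θ))]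
  have hright : ((1 - v) ^ ω ≤ π / π₀) ↔
      (1 - v) ^ (β / θ) ≤ π ^ (1 + β / σ - β / γ) / π₀ ^ (1 + β / σ - β / γ) := by
    rw [← Real.rpow_le_rpow_iff (by positivity : (0:ℝ) ≤ (1 - v) ^ ω)
      (by positivity : (0:ℝ) ≤ π / π₀) he,
      ← Real.rpow_mul hv.le, hωe, Real.div_rpow hπ.le hπ₀.le]
  rw [hright, le_div_iff₀ (by positivity : (0:ℝ) < π₀ ^ (1 + β / σ - β / γ))]
  constructor <;> intro h <;> nlinarith [h]
end
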